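/- For all tensor slots i ≠ j and all indices a ≠ b in {1,…,N}, the graded permutation commutes with the quadratic element: [P_{ij}, E_{ab}E_{ba}] = 0. -/
import Mathlib


open Finset

namespace Glnm

/-- Parity: `p(a) = 0` for bosonic indices (`a ≤ n` in 1-based terms, i.e. `a.val < n`),
`p(a) = 1` for fermionic ones. -/
def par (n N : ℕ) (a : Fin N) : ℕ := if (a : ℕ) < n then 0 else 1

/-- The Koszul-sign realization `e^{(j)}_{ab} = σ^{p(a)+p(b)} ⊗ ⋯ ⊗ σ^{p(a)+p(b)} ⊗ e_{ab} ⊗ I ⊗ ⋯ ⊗ I`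
on `(ℂ^N)^{⊗k}`, realized as matrices indexed by tuples `Fin k → Fin N`. -/
noncomputable def eop (n N k : ℕ) (j : Fin k) (a b : Fin N) :
    Matrix (Fin k → Fin N) (Fin k → Fin N) ℂ :=
  fun x y =>
    (if x j = a ∧ y j = b then (1 : ℂ) else 0) *
      (-1 : ℂ) ^ ((par n N a + par n N b) *
        ∑ l ∈ Finset.univ.filter (fun l : Fin k => l < j), par n N (x l)) *
      ∏ l ∈ Finset.univ.filter (fun l : Fin k => l ≠ j),
        (if x l = y l then (1 : ℂ) else 0)

/-- `E_{ab} = ∑_{j=1}^k e^{(j)}_{ab}`. -/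
noncomputable def Egen (n N k : ℕ) (a b : Fin N) : Matrix (Fin k → Fin N) (Fin k → Fin N) ℂ :=
  ∑ j : Fin k, eop n N k j a b

/-- The graded permutation `P_{ij} = ∑_{a,b} (−1)^{p(b)} e^{(i)}_{ab} e^{(j)}_{ba}`. -/
noncomputable def Pg (n N k : ℕ) (i j : Fin k) : Matrix (Fin k → Fin N) (Fin k → Fin N) ℂ :=
  ∑ a : Fin N, ∑ b : Fin N,
    ((-1 : ℂ) ^ par n N b) • (eop n N k i a b * eop n N k j b a)

/-- Commutator. -/
def comm {α : Type*} [Ring α] (X Y : α) : α := X * Y - Y * X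

/-- Anticommutator. -/
def acomm {α : Type*} [Ring α] (X Y : α) : α := X * Y + Y * X

/-- The dynamical connection matrix
`A_a = ∑_j z_j e^{(j)}_{aa} + ∑_{b ≠ a} (−1)^{p(b)} (E_{ab}E_{ba} − E_{aa})/(λ_a − λ_b)`. -/
noncomputable def dynA (n N k : ℕ) (z : Fin k → ℂ) (lam : Fin N → ℂ) (a : Fin N) :
    Matrix (Fin k → Fin N) (Fin k → Fin N) ℂ :=
  (∑ j : Fin k, z j • eop n N k j a a) +
    ∑ b ∈ Finset.univ.filter (fun b : Fin N => b ≠ a),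
      (((-1 : ℂ) ^ par n N b) / (lam a - lam b)) •
        (Egen n N k a b * Egen n N k b a - Egen n N k a a)

/-- The (twisted) KZ connection matrix
`B_i = ∑_c λ_c e^{(i)}_{cc} + ∑_{j ≠ i} P_{ij}/(z_i − z_j)`. -/
noncomputable def kzB (n N k : ℕ) (z : Fin k → ℂ) (lam : Fin N → ℂ) (i : Fin k) :
    Matrix (Fin k → Fin N) (Fin k → Fin N) ℂ :=
  (∑ c : Fin N, lam c • eop n N k i c c) +
    ∑ j ∈ Finset.univ.filter (fun j : Fin k => j ≠ i),
      ((z i - z j)⁻¹) • Pg n N k i j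

/-- Adjacent graded permutation `P_{s_l} = P_{l,l+1}` (0-based slots). -/
noncomputable def Ps (n N k : ℕ) (l : ℕ) (h : l + 1 < k) :
    Matrix (Fin k → Fin N) (Fin k → Fin N) ℂ :=
  Pg n N k ⟨l, Nat.lt_of_succ_lt h⟩ ⟨l + 1, h⟩

/-- The highest-configuration vector `e_1 ⊗ ⋯ ⊗ e_N ∈ (ℂ^N)^{⊗N}`. -/
noncomputable def baseVec (N : ℕ) : (Fin N → Fin N) → ℂ :=
  fun x => if x = (fun j => j) then 1 else 0

/-- `Ω^i = ∑_{σ ∈ S_N} (−1)^{i·ℓ(σ)} P_σ (e_1 ⊗ ⋯ ⊗ e_N)`, where `P_σ = ρ σ` for the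
(unique) multiplicative extension `ρ` of the adjacent graded permutations. -/
noncomputable def OmegaVec (N : ℕ) (i : ℕ)
    (ρ : Equiv.Perm (Fin N) →* Matrix (Fin N → Fin N) (Fin N → Fin N) ℂ) :
    (Fin N → Fin N) → ℂ :=
  ∑ σ : Equiv.Perm (Fin N),
    (((Equiv.Perm.sign σ : ℤ) : ℂ) ^ i) • Matrix.mulVec (ρ σ) (baseVec N)

/-- The set of `(z, λ)` with pairwise distinct `z`'s and pairwise distinct `λ`'s. -/
def Usep (N : ℕ) : Set ((Fin N → ℂ) × (Fin N → ℂ)) :=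
  {p | (∀ i j : Fin N, i ≠ j → p.1 i ≠ p.1 j) ∧ (∀ a b : Fin N, a ≠ b → p.2 a ≠ p.2 b)}


section Aux
variable {n N k : ℕ}

/-- Partial Koszul sum appearing in the sign of `eop`. -/
def Sw (n N : ℕ) {k : ℕ} (j : Fin k) (x : Fin k → Fin N) : ℕ :=
  ∑ l ∈ Finset.univ.filter (fun l : Fin k => l < j), par n N (x l)

lemma par01 (n N : ℕ) (a : Fin N) : par n N a = 0 ∨ par n N a = 1 := by
  unfold par; split <;> simp

lemma neg_one_pow_congr {u v : ℕ} (h : u % 2 = v % 2) : (-1 : ℂ) ^ u = (-1 : ℂ) ^ v := by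
  conv_lhs => rw [← Nat.div_add_mod u 2]
  conv_rhs => rw [← Nat.div_add_mod v 2]
  rw [pow_add, pow_add, pow_mul, pow_mul, h]
  norm_num

lemma Sw_update_of_not_lt {i j : Fin k} (h : ¬ i < j) (x : Fin k → Fin N) (b : Fin N) :
    Sw n N j (Function.update x i b) = Sw n N j x := by
  unfold Sw
  refine Finset.sum_congr rfl fun l hl => ?_
  simp only [mem_filter, mem_univ, true_and] at hl
  have : l ≠ i := by rintro rfl; exact h hl
  rw [Function.update_of_ne this]

lemma Sw_update_of_lt {i j : Fin k} (h : i < j) (x : Fin k → Fin N) (b : Fin N) :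
    Sw n N j (Function.update x i b) + par n N (x i) = Sw n N j x + par n N b := by
  unfold Sw
  have hi : i ∈ Finset.univ.filter (fun l : Fin k => l < j) := by simp [h]
  rw [← Finset.add_sum_erase _ _ hi, ← Finset.add_sum_erase _ _ hi]
  have hrest : ∑ l ∈ (Finset.univ.filter (fun l : Fin k => l < j)).erase i,
      par n N (Function.update x i b l) =
      ∑ l ∈ (Finset.univ.filter (fun l : Fin k => l < j)).erase i, par n N (x l) := by
    refine Finset.sum_congr rfl fun l hl => ?_
    rw [Function.update_of_ne (Finset.ne_of_mem_erase hl)]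
  rw [hrest, Function.update_self]
  ring

lemma eop_apply (j : Fin k) (a b : Fin N) (x y : Fin k → Fin N) :
    eop n N k j a b x y =
      if x j = a ∧ y = Function.update x j b
      then (-1 : ℂ) ^ ((par n N a + par n N b) * Sw n N j x) else 0 := by
  unfold eop Sw
  rw [Finset.prod_boole]
  have hiff : (x j = a ∧ y = Function.update x j b) ↔
      ((x j = a ∧ y j = b) ∧ ∀ l ∈ Finset.univ.filter (fun l : Fin k => l ≠ j), x l = y l) := by
    constructor
    · rintro ⟨h, rfl⟩
      refine ⟨⟨h, Function.update_self _ _ _⟩, ?_⟩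
      intro l hl
      simp only [mem_filter, mem_univ, true_and] at hl
      rw [Function.update_of_ne hl]
    · rintro ⟨⟨h1, h2⟩, h3⟩
      refine ⟨h1, funext fun l => ?_⟩
      by_cases hl : l = j
      · subst hl; simp [h2]
      · rw [Function.update_of_ne hl]
        exact (h3 l (by simp [hl])).symm
  by_cases h : x j = a ∧ y = Function.update x j b
  · obtain ⟨h1, hall⟩ := hiff.mp h
    rw [if_pos h, if_pos h1, if_pos hall, one_mul, mul_one]
  · rw [if_neg h]
    rcases Classical.em (x j = a ∧ y j = b) with h1 | h1
    · have hc : ¬ ∀ l ∈ Finset.univ.filter (fun l : Fin k => l ≠ j), x l = y l := by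
        intro hc; exact h (hiff.mpr ⟨h1, hc⟩)
      rw [if_pos h1, if_neg hc, mul_zero]
    · rw [if_neg h1, zero_mul, zero_mul]

lemma eop_mul_apply {i j : Fin k} (hij : i ≠ j) (a b c d : Fin N) (x y : Fin k → Fin N) :
    (eop n N k i a b * eop n N k j c d) x y =
      if x i = a ∧ x j = c ∧ y = Function.update (Function.update x i b) j d
      then (-1 : ℂ) ^ ((par n N a + par n N b) * Sw n N i x +
        (par n N c + par n N d) * Sw n N j (Function.update x i b)) else 0 := by
  rw [Matrix.mul_apply]
  rw [Finset.sum_eq_single (Function.update x i b)]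
  · rw [eop_apply, eop_apply, Function.update_of_ne hij.symm]
    rw [pow_add]
    by_cases h1 : x i = a
    · simp only [h1, true_and, if_pos rfl]
      by_cases h2 : x j = c ∧ y = Function.update (Function.update x i b) j d
      · simp [h2]
      · simp [h2]
    · rw [if_neg (fun hc => h1 hc.1), zero_mul,
        if_neg (fun hc : x i = a ∧ _ => h1 hc.1)]
  · intro z _ hz
    rw [eop_apply, if_neg (fun hc => hz hc.2), zero_mul]
  · intro h; exact absurd (Finset.mem_univ _) h

lemma eop_swap {i j : Fin k} (hij : i ≠ j) (a b c d : Fin N) :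
    eop n N k i a b * eop n N k j c d =
      ((-1 : ℂ) ^ ((par n N a + par n N b) * (par n N c + par n N d))) •
        (eop n N k j c d * eop n N k i a b) := by
  ext x y
  rw [Matrix.smul_apply, eop_mul_apply hij, eop_mul_apply hij.symm]
  have hupd : Function.update (Function.update x i b) j d =
      Function.update (Function.update x j d) i b := Function.update_comm hij b d x
  by_cases hc : x i = a ∧ x j = c ∧ y = Function.update (Function.update x i b) j d
  · obtain ⟨h1, h2, h3⟩ := hc
    rw [if_pos ⟨h1, h2, h3⟩, if_pos ⟨h2, h1, hupd ▸ h3⟩, smul_eq_mul, ← pow_add]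
    set s := par n N a + par n N b with hs
    set t := par n N c + par n N d with ht
    rcases lt_or_gt_of_ne hij with hlt | hgt
    · rw [Sw_update_of_not_lt (by omega : ¬ j < i)]
      have hU : Sw n N j (Function.update x i b) + par n N a = Sw n N j x + par n N b := by
        have := Sw_update_of_lt (n := n) hlt x b; rwa [h1] at this
      refine neg_one_pow_congr ?_
      have hmod : Sw n N j (Function.update x i b) ≡
          (Sw n N j x + par n N a + par n N b) [MOD 2] := by
        unfold Nat.ModEq; omega
      have key := (hmod.mul_left t).add_left (s * Sw n N i x)
      have heq : s * Sw n N i x + t * (Sw n N j x + par n N a + par n N b) =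
          s * t + (t * Sw n N j x + s * Sw n N i x) := by rw [hs, ht]; ring
      rw [heq] at key
      exact key
    · rw [Sw_update_of_not_lt (by omega : ¬ i < j)]
      have hV : Sw n N i (Function.update x j d) + par n N c = Sw n N i x + par n N d := by
        have := Sw_update_of_lt (n := n) hgt x d; rwa [h2] at this
      refine neg_one_pow_congr ?_
      have hmod : Sw n N i x ≡
          (Sw n N i (Function.update x j d) + par n N c + par n N d) [MOD 2] := by
        unfold Nat.ModEq; omega
      have key := (hmod.mul_left s).add_right (t * Sw n N j x)
      have heq : s * (Sw n N i (Function.update x j d) + par n N c + par n N d) + t * Sw n N j x =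
          s * t + (t * Sw n N j x + s * Sw n N i (Function.update x j d)) := by
        rw [hs, ht]; ring
      rw [heq] at key
      exact key
  · rw [if_neg hc, if_neg (fun h => hc ⟨h.2.1, h.1, hupd ▸ h.2.2⟩), smul_zero]

lemma eop_mul_same (j : Fin k) (a b c d : Fin N) :
    eop n N k j a b * eop n N k j c d = if b = c then eop n N k j a d else 0 := by
  ext x y
  rw [Matrix.mul_apply, Finset.sum_eq_single (Function.update x j b)]
  · rw [eop_apply, eop_apply, Function.update_self, Function.update_idem,
      Sw_update_of_not_lt (lt_irrefl j)]
    by_cases hbc : b = c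
    · subst hbc
      have hrhs : (if b = b then eop n N k j a d else 0) x y = eop n N k j a d x y := by
        rw [if_pos rfl]
      rw [hrhs, eop_apply]
      by_cases h1 : x j = a
      · by_cases h2 : y = Function.update x j d
        · rw [if_pos ⟨h1, rfl⟩, if_pos ⟨rfl, h2⟩, if_pos ⟨h1, h2⟩, ← pow_add]
          refine neg_one_pow_congr ?_
          have he : (par n N a + par n N b) * Sw n N j x +
              (par n N b + par n N d) * Sw n N j x =
              (par n N a + par n N d) * Sw n N j x + (par n N b * Sw n N j x) * 2 := by ring
          rw [he, Nat.add_mul_mod_self_right]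
        · simp [h2]
      · simp [h1]
    · simp [hbc]
  · intro z _ hz
    rw [eop_apply, if_neg (fun hc => hz hc.2), zero_mul]
  · intro h; exact absurd (Finset.mem_univ _) h

lemma Pg_mul_right (i j : Fin k) (M : Matrix (Fin k → Fin N) (Fin k → Fin N) ℂ) :
    Pg n N k i j * M = ∑ a : Fin N, ∑ b : Fin N,
      ((-1 : ℂ) ^ par n N b) • (eop n N k i a b * (eop n N k j b a * M)) := by
  unfold Pg
  rw [Finset.sum_mul]
  refine Finset.sum_congr rfl fun a _ => ?_
  rw [Finset.sum_mul]
  refine Finset.sum_congr rfl fun b _ => ?_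
  rw [smul_mul_assoc, mul_assoc]

lemma Pg_mul_left (i j : Fin k) (M : Matrix (Fin k → Fin N) (Fin k → Fin N) ℂ) :
    M * Pg n N k i j = ∑ a : Fin N, ∑ b : Fin N,
      ((-1 : ℂ) ^ par n N b) • ((M * eop n N k i a b) * eop n N k j b a) := by
  unfold Pg
  rw [Finset.mul_sum]
  refine Finset.sum_congr rfl fun a _ => ?_
  rw [Finset.mul_sum]
  refine Finset.sum_congr rfl fun b _ => ?_
  rw [mul_smul_comm, mul_assoc]

lemma Pg_mul_eop_j (i j : Fin k) (c d : Fin N) :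
    Pg n N k i j * eop n N k j c d = eop n N k i c d * Pg n N k i j := by
  rw [Pg_mul_right, Pg_mul_left]
  have lhs : ∀ a b : Fin N,
      ((-1 : ℂ) ^ par n N b) • (eop n N k i a b * (eop n N k j b a * eop n N k j c d)) =
      if a = c then ((-1 : ℂ) ^ par n N b) • (eop n N k i a b * eop n N k j b d) else 0 := by
    intro a b
    rw [eop_mul_same]
    by_cases h : a = c <;> simp [h]
  have rhs : ∀ a b : Fin N,
      ((-1 : ℂ) ^ par n N b) • ((eop n N k i c d * eop n N k i a b) * eop n N k j b a) =
      if d = a then ((-1 : ℂ) ^ par n N b) • (eop n N k i c b * eop n N k j b a) else 0 := by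
    intro a b
    rw [eop_mul_same]
    by_cases h : d = a <;> simp [h]
  simp only [lhs, rhs]
  rw [Finset.sum_comm (γ := Fin N)]
  conv_rhs => rw [Finset.sum_comm (γ := Fin N)]
  refine Finset.sum_congr rfl fun b _ => ?_
  rw [Finset.sum_ite_eq' Finset.univ c
      (fun a => ((-1 : ℂ) ^ par n N b) • (eop n N k i a b * eop n N k j b d)),
    Finset.sum_ite_eq Finset.univ d
      (fun a => ((-1 : ℂ) ^ par n N b) • (eop n N k i c b * eop n N k j b a))]
  simp

lemma Pg_mul_eop_i {i j : Fin k} (hij : i ≠ j) (c d : Fin N) :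
    Pg n N k i j * eop n N k i c d = eop n N k j c d * Pg n N k i j := by
  rw [Pg_mul_right, Pg_mul_left]
  have lhs : ∀ a b : Fin N,
      ((-1 : ℂ) ^ par n N b) • (eop n N k i a b * (eop n N k j b a * eop n N k i c d)) =
      if b = c then
        ((-1 : ℂ) ^ (par n N b + (par n N b + par n N a) * (par n N c + par n N d))) •
          (eop n N k i a d * eop n N k j b a) else 0 := by
    intro a b
    rw [eop_swap hij.symm, mul_smul_comm, smul_smul, ← pow_add, ← mul_assoc, eop_mul_same]
    by_cases h : b = c <;> simp [h]
  have rhs : ∀ a b : Fin N,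
      ((-1 : ℂ) ^ par n N b) • ((eop n N k j c d * eop n N k i a b) * eop n N k j b a) =
      if d = b then
        ((-1 : ℂ) ^ (par n N b + (par n N c + par n N d) * (par n N a + par n N b))) •
          (eop n N k i a b * eop n N k j c a) else 0 := by
    intro a b
    rw [eop_swap hij.symm, smul_mul_assoc, smul_smul, ← pow_add, mul_assoc, eop_mul_same]
    by_cases h : d = b <;> simp [h]
  simp only [lhs, rhs]
  refine Finset.sum_congr rfl fun a _ => ?_
  rw [Finset.sum_ite_eq' Finset.univ c
      (fun b => ((-1 : ℂ) ^ (par n N b + (par n N b + par n N a) * (par n N c + par n N d))) •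
        (eop n N k i a d * eop n N k j b a)),
    Finset.sum_ite_eq Finset.univ d
      (fun b => ((-1 : ℂ) ^ (par n N b + (par n N c + par n N d) * (par n N a + par n N b))) •
        (eop n N k i a b * eop n N k j c a))]
  simp only [Finset.mem_univ, if_pos]
  have hsign : ((-1 : ℂ) ^ (par n N c + (par n N c + par n N a) * (par n N c + par n N d))) =
      ((-1 : ℂ) ^ (par n N d + (par n N c + par n N d) * (par n N a + par n N d))) := by
    refine neg_one_pow_congr ?_
    rcases par01 n N a with h1 | h1 <;> rcases par01 n N c with h2 | h2 <;>
      rcases par01 n N d with h3 | h3 <;> rw [h1, h2, h3]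
  rw [hsign]

lemma Pg_mul_eop_other {i j l : Fin k} (hil : i ≠ l) (hjl : j ≠ l) (c d : Fin N) :
    Pg n N k i j * eop n N k l c d = eop n N k l c d * Pg n N k i j := by
  rw [Pg_mul_right, Pg_mul_left]
  have term : ∀ a b : Fin N,
      eop n N k i a b * (eop n N k j b a * eop n N k l c d) =
      (eop n N k l c d * eop n N k i a b) * eop n N k j b a := by
    intro a b
    have hone : ((-1 : ℂ) ^ ((par n N b + par n N a) * (par n N c + par n N d))) *
        ((-1 : ℂ) ^ ((par n N a + par n N b) * (par n N c + par n N d))) = 1 := by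
      rw [← pow_add]
      have h0 : ((par n N b + par n N a) * (par n N c + par n N d) +
          (par n N a + par n N b) * (par n N c + par n N d)) % 2 = 0 % 2 := by
        have he : (par n N b + par n N a) * (par n N c + par n N d) +
            (par n N a + par n N b) * (par n N c + par n N d) =
            ((par n N a + par n N b) * (par n N c + par n N d)) * 2 := by ring
        rw [he, Nat.mul_mod_left]
      rw [neg_one_pow_congr h0, pow_zero]
    rw [eop_swap hjl b a c d, mul_smul_comm, ← mul_assoc, eop_swap hil a b c d,
      smul_mul_assoc, smul_smul, hone, one_smul]
  simp only [term]

lemma Pg_mul_Egen {i j : Fin k} (hij : i ≠ j) (c d : Fin N) :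
    Pg n N k i j * Egen n N k c d = Egen n N k c d * Pg n N k i j := by
  unfold Egen
  rw [Finset.mul_sum, Finset.sum_mul]
  refine Fintype.sum_equiv (Equiv.swap i j) _ _ fun l => ?_
  by_cases hl : l = i
  · rw [hl, Equiv.swap_apply_left]
    exact Pg_mul_eop_i hij c d
  by_cases hl2 : l = j
  · rw [hl2, Equiv.swap_apply_right]
    exact Pg_mul_eop_j i j c d
  · rw [Equiv.swap_apply_of_ne_of_ne hl hl2]
    exact Pg_mul_eop_other (fun h => hl h.symm) (fun h => hl2 h.symm) c d

end Aux


end Glnm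

open Glnm in
/-- the graded permutation commutes with the quadratic element:
`[P_{ij}, E_{ab}E_{ba}] = 0`. -/
theorem Pg_comm_quadratic (n m k : ℕ) (hk : 1 ≤ k)
    (i j : Fin k) (hij : i ≠ j) (a b : Fin (n + m)) (hab : a ≠ b) :
    comm (Pg n (n + m) k i j) (Egen n (n + m) k a b * Egen n (n + m) k b a) = 0 := by
  unfold Glnm.comm
  rw [← mul_assoc, Pg_mul_Egen hij, mul_assoc, Pg_mul_Egen hij, ← mul_assoc, sub_self]
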